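/- arXiv:2507.05036 — 3 statements merged into one kernel-verified Lean document; each statement's English description precedes it below -/
import Mathlib

section
/- Let q : Fin 3 → ℂ. Then the L2 operator norm of the matrix uΞ q equals Real.sqrt (‖q 0‖² + ‖q 1‖² + ‖q 2‖²), i.e., the largest singular value of uΞ q equals the Euclidean norm of the perturbation vector q. -/
open scoped Matrix.Norms.L2Operator
open Matrix

noncomputable section

/-- The 3×9 matrix gain representing the nonlinear advection term `u·∇u`:
`(uΞ q) i (i', j) = if i = i' then -(q j) else 0`. -/
def uΞ (q : Fin 3 → ℂ) : Matrix (Fin 3) (Fin 3 × Fin 3) ℂ :=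
  fun i p => if i = p.1 then -(q p.2) else 0

namespace Matrix

variable {𝕜 m n : Type*} [RCLike 𝕜] [Fintype m] [Fintype n] [DecidableEq m]
  [DecidableEq n]

/-- By the C⋆-identity, `‖A‖² = ‖A Aᴴ‖ = ‖c • 1‖ = c`. -/
theorem l2_opNorm_eq_sqrt_of_mul_conjTranspose_eq_smul_one [Nonempty m]
    (A : Matrix m n 𝕜) {c : ℝ} (hc : 0 ≤ c) (h : A * Aᴴ = (c : 𝕜) • (1 : Matrix m m 𝕜)) :
    ‖A‖ = √c := by
  have hsq : ‖A‖ * ‖A‖ = c := by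
    rw [← l2_opNorm_conjTranspose A, ← l2_opNorm_conjTranspose_mul_self,
      conjTranspose_conjTranspose, h, smul_one_eq_diagonal, l2_opNorm_diagonal, pi_norm_const,
      RCLike.norm_ofReal, abs_of_nonneg hc]
  rw [← hsq, Real.sqrt_mul_self (norm_nonneg A)]

end Matrix

/-- Row `i` of `uΞ q` is `-q` placed in block `i`, so distinct rows have disjoint supports. -/
theorem uΞ_mul_conjTranspose (q : Fin 3 → ℂ) :
    uΞ q * (uΞ q)ᴴ = ((∑ j, ‖q j‖ ^ 2 : ℝ) : ℂ) • (1 : Matrix (Fin 3) (Fin 3) ℂ) := by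
  ext i k
  by_cases hik : i = k
  · subst hik
    simp [uΞ, mul_apply, Fintype.sum_prod_type, Complex.mul_conj', Finset.sum_ite_eq]
  · simp [uΞ, mul_apply, Fintype.sum_prod_type, hik, Ne.symm hik]

theorem l2_opNorm_uXi (q : Fin 3 → ℂ) :
    ‖uΞ q‖ = Real.sqrt (‖q 0‖ ^ 2 + ‖q 1‖ ^ 2 + ‖q 2‖ ^ 2) := by
  rw [← Fin.sum_univ_three fun j => ‖q j‖ ^ 2]
  exact (uΞ q).l2_opNorm_eq_sqrt_of_mul_conjTranspose_eq_smul_one (by positivity)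
    (uΞ_mul_conjTranspose q)
end
end

section
/- Let n and m be nonempty finite types with decidable equality and let M : Matrix n m ℂ with M ≠ 0. Then there exists Δ : Matrix m n ℂ with ‖Δ‖ = ‖M‖⁻¹ such that 1 - M * Δ is not invertible; consequently sInf {r : ℝ | ∃ Δ : Matrix m n ℂ, ¬ IsUnit (1 - M * Δ) ∧ r = ‖Δ‖} = ‖M‖⁻¹. (Thus the structured singular value with respect to the set of ALL complex matrices equals the largest singular value: μ(M) = ‖M‖.) -/
/-!
If `‖M * Δ‖ < 1` then `1 - M * Δ` is invertible (Neumann series), so every destabilizing `Δ`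
has `‖Δ‖ ≥ ‖M‖⁻¹`. The bound is attained by `Δ = ‖M * Mᴴ‖⁻¹ • Mᴴ`: the matrix `M * Mᴴ` is
positive semidefinite, so in the C⋆-algebra of square matrices its norm `‖M‖²` lies in its
spectrum, i.e. `1 - M * Δ` is singular, while `‖Δ‖ = ‖M‖ / ‖M‖² = ‖M‖⁻¹`.
-/

open scoped Matrix.Norms.L2Operator

theorem CStarAlgebra.one_mem_spectrum_inv_norm_smul {A : Type*} [CStarAlgebra A]
    [PartialOrder A] [StarOrderedRing A] {a : A} (ha : 0 ≤ a) (ha0 : a ≠ 0) :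
    1 ∈ spectrum ℝ (‖a‖⁻¹ • a) := by
  have : Nontrivial A := ⟨⟨a, 0, ha0⟩⟩
  have hna : ‖a‖ ≠ 0 := norm_ne_zero_iff.mpr ha0
  simpa [hna] using
    (spectrum.smul_mem_smul_iff (r := Units.mk0 _ (inv_ne_zero hna))).mpr
      (norm_mem_spectrum_of_nonneg ha)

theorem one_le_norm_of_not_isUnit_one_sub {A : Type*} [NormedRing A] [HasSummableGeomSeries A]
    {a : A} (h : ¬ IsUnit (1 - a)) : 1 ≤ ‖a‖ :=
  not_lt.mp (mt isUnit_one_sub_of_norm_lt_one h)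

namespace Matrix

variable {n m : Type*} [Fintype n] [Fintype m] [DecidableEq n] [DecidableEq m]

theorem inv_l2_opNorm_le_of_not_isUnit_one_sub_mul {𝕜 : Type*} [RCLike 𝕜]
    {M : Matrix n m 𝕜} {Δ : Matrix m n 𝕜} (hM : M ≠ 0) (h : ¬ IsUnit (1 - M * Δ)) :
    ‖M‖⁻¹ ≤ ‖Δ‖ := by
  rw [inv_le_iff_one_le_mul₀' (norm_pos_iff.mpr hM)]
  exact (one_le_norm_of_not_isUnit_one_sub h).trans (l2_opNorm_mul M Δ)

theorem l2_opNorm_mul_conjTranspose_self {𝕜 : Type*} [RCLike 𝕜] (M : Matrix n m 𝕜) :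
    ‖M * Mᴴ‖ = ‖M‖ * ‖M‖ := by
  simpa [l2_opNorm_conjTranspose] using l2_opNorm_conjTranspose_mul_self Mᴴ

theorem l2_opNorm_inv_norm_mul_conjTranspose_self_smul (M : Matrix n m ℂ) :
    ‖‖M * Mᴴ‖⁻¹ • Mᴴ‖ = ‖M‖⁻¹ := by
  rw [← Complex.coe_smul, norm_smul, Complex.norm_real, norm_inv, norm_norm,
    l2_opNorm_mul_conjTranspose_self, l2_opNorm_conjTranspose]
  grind

open scoped MatrixOrder ComplexOrder in
theorem not_isUnit_one_sub_mul_inv_norm_mul_conjTranspose_self_smul {M : Matrix n m ℂ}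
    (hM : M ≠ 0) : ¬ IsUnit (1 - M * (‖M * Mᴴ‖⁻¹ • Mᴴ)) := by
  have hpos : 0 ≤ M * Mᴴ := (posSemidef_self_mul_conjTranspose M).nonneg
  have hne : M * Mᴴ ≠ 0 := by
    have hM' : ‖M‖ ≠ 0 := norm_ne_zero_iff.mpr hM
    rw [← norm_ne_zero_iff, l2_opNorm_mul_conjTranspose_self]
    exact mul_ne_zero hM' hM'
  have h := CStarAlgebra.one_mem_spectrum_inv_norm_smul hpos hne
  rw [spectrum.mem_iff, map_one] at h
  rwa [Matrix.mul_smul]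

end Matrix

theorem mu_unstructured_eq_norm_general {n m : Type*}
    [Fintype n] [Fintype m] [DecidableEq n] [DecidableEq m]
    (M : Matrix n m ℂ) (hM : M ≠ 0) :
    (∃ Δ : Matrix m n ℂ, ‖Δ‖ = ‖M‖⁻¹ ∧ ¬ IsUnit (1 - M * Δ)) ∧
      sInf {r : ℝ | ∃ Δ : Matrix m n ℂ, ¬ IsUnit (1 - M * Δ) ∧ r = ‖Δ‖}
        = ‖M‖⁻¹ := by
  have hnorm := M.l2_opNorm_inv_norm_mul_conjTranspose_self_smul
  have hsingular := Matrix.not_isUnit_one_sub_mul_inv_norm_mul_conjTranspose_self_smul hM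
  refine ⟨⟨_, hnorm, hsingular⟩, IsLeast.csInf_eq ⟨⟨_, hsingular, hnorm.symm⟩, ?_⟩⟩
  rintro _ ⟨Δ, hΔ, rfl⟩
  exact Matrix.inv_l2_opNorm_le_of_not_isUnit_one_sub_mul hM hΔ

theorem mu_unstructured_eq_norm {n m : Type*}
    [Fintype n] [Fintype m] [DecidableEq n] [DecidableEq m]
    [Nonempty n] [Nonempty m]
    (M : Matrix n m ℂ) (hM : M ≠ 0) :
    (∃ Δ : Matrix m n ℂ, ‖Δ‖ = ‖M‖⁻¹ ∧ ¬ IsUnit (1 - M * Δ)) ∧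
      sInf {r : ℝ | ∃ Δ : Matrix m n ℂ, ¬ IsUnit (1 - M * Δ) ∧ r = ‖Δ‖}
        = ‖M‖⁻¹ :=
  mu_unstructured_eq_norm_general M hM
end

section
/- Let N : ℕ with 0 < N and let M : Matrix ((Fin N) × Fin 3) ((Fin 3 × Fin N) × Fin 3) ℂ be a (discretized) frequency response matrix. If the destabilizing-norm set S M (Δu N) is nonempty, then the following chain of inequalities holds: ‖M‖⁻¹ ≤ sInf (S M (Δnr N)) ≤ sInf (S M (Δr N)) ≤ sInf (S M (Δu N)); equivalently, μ_{Δu N}(M) ≤ μ_{Δr N}(M) ≤ μ_{Δnr N}(M) ≤ ‖M‖, so the unstructured stability threshold is the most conservative and the componentwise-structured threshold the least conservative. -/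
open scoped Matrix.Norms.L2Operator

/-- The destabilizing-norm set of a matrix `M` with respect to an uncertainty
structure `Δs`: the norms of structured uncertainties that destabilize the
feedback interconnection. -/
noncomputable def destabSet {n m : Type*}
    [Fintype n] [Fintype m] [DecidableEq n] [DecidableEq m]
    (M : Matrix n m ℂ) (Δs : Set (Matrix m n ℂ)) : Set ℝ :=
  {r : ℝ | ∃ Δ ∈ Δs, ¬ IsUnit (1 - M * Δ) ∧ r = ‖Δ‖}

/-- The non-repeated block-diagonal uncertainty set: block-diagonal matrices
with three (possibly distinct) full blocks. -/
def Δnr (N : ℕ) : Set (Matrix ((Fin 3 × Fin N) × Fin 3) ((Fin N) × Fin 3) ℂ) :=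
  {D | ∃ f : Fin 3 → Matrix (Fin 3 × Fin N) (Fin N) ℂ, D = Matrix.blockDiagonal f}

/-- The repeated block-diagonal uncertainty set: block-diagonal matrices with
three copies of a single full block. -/
def Δr (N : ℕ) : Set (Matrix ((Fin 3 × Fin N) × Fin 3) ((Fin N) × Fin 3) ℂ) :=
  {D | ∃ B : Matrix (Fin 3 × Fin N) (Fin N) ℂ, D = Matrix.blockDiagonal (fun _ => B)}

/-- The componentwise uncertainty set: block-diagonal matrices with three
repeated blocks, each block being a stack of three diagonal matrices. -/
def Δu (N : ℕ) : Set (Matrix ((Fin 3 × Fin N) × Fin 3) ((Fin N) × Fin 3) ℂ) :=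
  {D | ∃ B : Matrix (Fin 3 × Fin N) (Fin N) ℂ,
    D = Matrix.blockDiagonal (fun _ => B) ∧
    ∃ d : Fin 3 → Fin N → ℂ, ∀ i k l, B (i, k) l = if k = l then d i k else 0}

/-! Every destabilizing `Δ` satisfies `1 ≤ ‖M * Δ‖ ≤ ‖M‖ * ‖Δ‖`, since `1 - X` is invertible by
the Neumann series whenever `‖X‖ < 1`; hence `‖M‖⁻¹` bounds each destabilizing-norm set from
below. The inclusions `Δu N ⊆ Δr N ⊆ Δnr N` then order the infima, each set being nonempty
because the smallest one is. -/

theorem one_le_norm_of_not_isUnit_one_sub_s14 {R : Type*} [NormedRing R] [HasSummableGeomSeries R]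
    {x : R} (hx : ¬IsUnit (1 - x)) : 1 ≤ ‖x‖ :=
  not_lt.mp fun hlt => hx (Units.oneSub x hlt).isUnit

section destabSet

variable {n m : Type*} [Fintype n] [Fintype m] [DecidableEq n] [DecidableEq m]

theorem destabSet_mono (M : Matrix n m ℂ) {s t : Set (Matrix m n ℂ)} (hst : s ⊆ t) :
    destabSet M s ⊆ destabSet M t := by
  rintro r ⟨Δ, hΔ, hΔM, rfl⟩
  exact ⟨Δ, hst hΔ, hΔM, rfl⟩

theorem inv_norm_le_of_mem_destabSet {M : Matrix n m ℂ} {Δs : Set (Matrix m n ℂ)} {r : ℝ}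
    (hr : r ∈ destabSet M Δs) : ‖M‖⁻¹ ≤ r := by
  obtain ⟨Δ, -, hΔM, rfl⟩ := hr
  have hgain : 1 ≤ ‖M‖ * ‖Δ‖ :=
    (one_le_norm_of_not_isUnit_one_sub_s14 hΔM).trans (Matrix.l2_opNorm_mul M Δ)
  have hM : 0 < ‖M‖ :=
    (norm_nonneg M).lt_of_ne fun h0 => by norm_num [← h0] at hgain
  exact (inv_le_iff_one_le_mul₀' hM).mpr hgain

theorem bddBelow_destabSet (M : Matrix n m ℂ) (Δs : Set (Matrix m n ℂ)) :
    BddBelow (destabSet M Δs) :=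
  ⟨‖M‖⁻¹, fun _ => inv_norm_le_of_mem_destabSet⟩

end destabSet

theorem Δu_subset_Δr (N : ℕ) : Δu N ⊆ Δr N := by
  rintro D ⟨B, hD, -⟩
  exact ⟨B, hD⟩

theorem Δr_subset_Δnr (N : ℕ) : Δr N ⊆ Δnr N := by
  rintro D ⟨B, hD⟩
  exact ⟨fun _ => B, hD⟩

theorem threshold_hierarchy_general (N : ℕ)
    (M : Matrix ((Fin N) × Fin 3) ((Fin 3 × Fin N) × Fin 3) ℂ)
    (h : (destabSet M (Δu N)).Nonempty) :
    ‖M‖⁻¹ ≤ sInf (destabSet M (Δnr N)) ∧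
      sInf (destabSet M (Δnr N)) ≤ sInf (destabSet M (Δr N)) ∧
      sInf (destabSet M (Δr N)) ≤ sInf (destabSet M (Δu N)) := by
  have hur := destabSet_mono M (Δu_subset_Δr N)
  have hrnr := destabSet_mono M (Δr_subset_Δnr N)
  exact ⟨le_csInf ((h.mono hur).mono hrnr) fun _ => inv_norm_le_of_mem_destabSet,
    csInf_le_csInf (bddBelow_destabSet M _) (h.mono hur) hrnr,
    csInf_le_csInf (bddBelow_destabSet M _) h hur⟩

theorem threshold_hierarchy (N : ℕ) (hN : 0 < N)
    (M : Matrix ((Fin N) × Fin 3) ((Fin 3 × Fin N) × Fin 3) ℂ)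
    (h : (destabSet M (Δu N)).Nonempty) :
    ‖M‖⁻¹ ≤ sInf (destabSet M (Δnr N)) ∧
      sInf (destabSet M (Δnr N)) ≤ sInf (destabSet M (Δr N)) ∧
      sInf (destabSet M (Δr N)) ≤ sInf (destabSet M (Δu N)) :=
  threshold_hierarchy_general N M h
end
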